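/- arXiv:2504.16477 — 3 statements merged into one kernel-verified Lean document; each statement's English description precedes it below -/
import Mathlib

section
/- Let E be a real inner product space, and let f : E → ℝ be a differentiable function that is μ-strongly convex and L-smooth with 0 < μ ≤ L. If the step size β satisfies 0 < β ≤ 2/(μ + L), then for all x₁, x₂ ∈ E: ‖x₁ − x₂ − β(∇f(x₁) − ∇f(x₂))‖ ≤ (1 − μβ)·‖x₁ − x₂‖. -/
/-!
Shifting by the quadratic, `φ = f - μ/2 ‖·‖²` is convex and `(L - μ)`-smooth with gradient
`∇f - μ • id`. Testing the lower (convexity) and upper (descent lemma) bounds of `φ` against each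
other gives co-coercivity of `∇φ`, which unwinds to the interpolation inequality
`μ L ‖x₁ - x₂‖² + ‖∇f x₁ - ∇f x₂‖² ≤ (μ + L) ⟪∇f x₁ - ∇f x₂, x₁ - x₂⟫`.
With `d = x₁ - x₂` and `G = ∇f x₁ - ∇f x₂`, expanding `‖d - β G‖²` and using this inequality
together with its consequence `μ ‖d‖ ≤ ‖G‖` bounds the square of the step by `(1 - μβ)² ‖d‖²`
as soon as `β (μ + L) ≤ 2`.
-/

open RealInnerProductSpace

section

variable {E : Type*} [NormedAddCommGroup E] [InnerProductSpace ℝ E]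

theorem le_add_inner_add_of_lipschitz_gradient [CompleteSpace E] {f : E → ℝ} {f' : E → E}
    {L : ℝ} (hf : ∀ x, HasGradientAt f (f' x) x)
    (hL : ∀ x y, ‖f' x - f' y‖ ≤ L * ‖x - y‖) (x y : E) :
    f y ≤ f x + ⟪f' x, y - x⟫ + L / 2 * ‖y - x‖ ^ 2 := by
  set v := y - x
  let φ : ℝ → ℝ := fun t ↦ f (x + t • v) - t * ⟪f' x, v⟫ - L / 2 * t ^ 2 * ‖v‖ ^ 2
  let φ' : ℝ → ℝ := fun t ↦ ⟪f' (x + t • v), v⟫ - ⟪f' x, v⟫ - L * t * ‖v‖ ^ 2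
  have hφ : ∀ t, HasDerivAt φ (φ' t) t := by
    intro t
    have hline : HasDerivAt (fun t : ℝ ↦ x + t • v) v t := by
      simpa using ((hasDerivAt_id t).smul_const v).const_add x
    refine ((((hf _).hasFDerivAt.comp_hasDerivAt t hline).sub
      ((hasDerivAt_id t).mul_const ⟪f' x, v⟫)).sub
      (((hasDerivAt_pow 2 t).const_mul (L / 2)).mul_const (‖v‖ ^ 2))).congr_deriv ?_
    simp only [φ', InnerProductSpace.toDual_apply_apply]
    ring
  have hφ'_nonpos : ∀ t ∈ interior (Set.Ici (0 : ℝ)), φ' t ≤ 0 := by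
    intro t ht
    rw [interior_Ici] at ht
    calc φ' t = ⟪f' (x + t • v) - f' x, v⟫ - L * t * ‖v‖ ^ 2 := by rw [inner_sub_left]
      _ ≤ L * ‖t • v‖ * ‖v‖ - L * t * ‖v‖ ^ 2 := by
        gcongr
        refine (real_inner_le_norm _ _).trans (mul_le_mul_of_nonneg_right ?_ (norm_nonneg v))
        simpa using hL (x + t • v) x
      _ = 0 := by rw [norm_smul, Real.norm_of_nonneg ht.le]; ring
  have hanti : AntitoneOn φ (Set.Ici 0) :=
    antitoneOn_of_hasDerivWithinAt_nonpos (convex_Ici 0)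
      (fun t _ ↦ (hφ t).continuousAt.continuousWithinAt) (fun t _ ↦ (hφ t).hasDerivWithinAt)
      hφ'_nonpos
  have h01 : φ 1 ≤ φ 0 := hanti Set.self_mem_Ici (Set.mem_Ici.2 zero_le_one) zero_le_one
  simp only [φ, v, one_smul, add_sub_cancel, one_mul, one_pow, zero_smul, add_zero, zero_mul,
    sub_zero, ne_eq, OfNat.ofNat_ne_zero, not_false_eq_true, zero_pow, mul_zero] at h01
  linarith

theorem sub_le_of_quadratic_bounds {φ : E → ℝ} {p : E → E} {M : ℝ}
    (hlower : ∀ x y, φ x + ⟪p x, y - x⟫ ≤ φ y)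
    (hupper : ∀ x y, φ y ≤ φ x + ⟪p x, y - x⟫ + M / 2 * ‖y - x‖ ^ 2) (x y : E) (t : ℝ) :
    φ x - φ y ≤ ⟪p x, x - y⟫ - t * ‖p x - p y‖ ^ 2 + M / 2 * t ^ 2 * ‖p x - p y‖ ^ 2 := by
  set u := p x - p y
  have h1 := hlower x (y + t • u)
  have h2 := hupper y (y + t • u)
  have hu : t * ⟪p x, u⟫ - t * ⟪p y, u⟫ = t * ‖u‖ ^ 2 := by
    rw [← mul_sub, ← inner_sub_left, real_inner_self_eq_norm_sq]
  rw [add_sub_cancel_left, norm_smul, mul_pow, Real.norm_eq_abs, sq_abs, inner_smul_right] at h2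
  rw [show y + t • u - x = -(x - y) + t • u by abel, inner_add_right, inner_neg_right,
    inner_smul_right] at h1
  linarith

theorem norm_sub_sq_le_mul_inner_of_quadratic_bounds {φ : E → ℝ} {p : E → E} {M : ℝ}
    (hM : 0 ≤ M)
    (hlower : ∀ x y, φ x + ⟪p x, y - x⟫ ≤ φ y)
    (hupper : ∀ x y, φ y ≤ φ x + ⟪p x, y - x⟫ + M / 2 * ‖y - x‖ ^ 2) (x y : E) :
    ‖p x - p y‖ ^ 2 ≤ M * ⟪p x - p y, x - y⟫ := by
  have hquad : ∀ t, 0 ≤ M * ‖p x - p y‖ ^ 2 * (t * t) + (-2 * ‖p x - p y‖ ^ 2) * t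
      + ⟪p x - p y, x - y⟫ := by
    intro t
    have hxy := sub_le_of_quadratic_bounds hlower hupper x y t
    have hyx := sub_le_of_quadratic_bounds hlower hupper y x t
    rw [norm_sub_rev (p y)] at hyx
    have hinner : ⟪p x - p y, x - y⟫ = ⟪p x, x - y⟫ + ⟪p y, y - x⟫ := by
      rw [inner_sub_left, ← neg_sub x y, inner_neg_right, sub_eq_add_neg]
    linarith
  have hdiscr := discrim_le_zero hquad
  have hnonneg := hquad 0
  rw [discrim] at hdiscr
  nlinarith [sq_nonneg ‖p x - p y‖, mul_nonneg hM hnonneg]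

theorem bregman_sub_half_mul_norm_sq (f : E → ℝ) (g : E → E) (μ : ℝ) (x y : E) :
    (f y - μ / 2 * ‖y‖ ^ 2) - (f x - μ / 2 * ‖x‖ ^ 2) - ⟪g x - μ • x, y - x⟫
      = f y - f x - ⟪g x, y - x⟫ - μ / 2 * ‖y - x‖ ^ 2 := by
  rw [norm_sub_sq_real, inner_sub_left, real_inner_smul_left, inner_sub_right x,
    real_inner_self_eq_norm_sq, real_inner_comm x y]
  ring

theorem mul_norm_sq_add_norm_sq_le_mul_inner_gradient_sub [CompleteSpace E] {f : E → ℝ}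
    {f' : E → E} {μ L : ℝ} (hμL : μ ≤ L) (hf : ∀ x, HasGradientAt f (f' x) x)
    (hstrong : ∀ x y, f x + ⟪f' x, y - x⟫ + μ / 2 * ‖y - x‖ ^ 2 ≤ f y)
    (hL : ∀ x y, ‖f' x - f' y‖ ≤ L * ‖x - y‖) (x y : E) :
    μ * L * ‖x - y‖ ^ 2 + ‖f' x - f' y‖ ^ 2 ≤ (μ + L) * ⟪f' x - f' y, x - y⟫ := by
  have hcoco := norm_sub_sq_le_mul_inner_of_quadratic_bounds
    (φ := fun z ↦ f z - μ / 2 * ‖z‖ ^ 2) (p := fun z ↦ f' z - μ • z) (sub_nonneg.2 hμL)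
    (fun x y ↦ by linarith [bregman_sub_half_mul_norm_sq f f' μ x y, hstrong x y])
    (fun x y ↦ by
      linarith [bregman_sub_half_mul_norm_sq f f' μ x y,
        le_add_inner_add_of_lipschitz_gradient hf hL x y]) x y
  rw [show f' x - μ • x - (f' y - μ • y) = (f' x - f' y) - μ • (x - y) by
    rw [smul_sub]; abel] at hcoco
  set G := f' x - f' y
  set d := x - y
  rw [norm_sub_sq_real, norm_smul, Real.norm_eq_abs, mul_pow, sq_abs, real_inner_smul_right,
    inner_sub_left G (μ • d) d, real_inner_smul_left, real_inner_self_eq_norm_sq] at hcoco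
  linear_combination hcoco

theorem norm_sub_smul_le_of_mul_norm_sq_add_norm_sq_le {d G : E} {μ L β : ℝ} (hμ : 0 < μ)
    (hμL : μ ≤ L) (hβ0 : 0 ≤ β) (hβ : β * (μ + L) ≤ 2)
    (hinterp : μ * L * ‖d‖ ^ 2 + ‖G‖ ^ 2 ≤ (μ + L) * ⟪G, d⟫) :
    ‖d - β • G‖ ≤ (1 - μ * β) * ‖d‖ := by
  have hCS : ⟪G, d⟫ ≤ ‖G‖ * ‖d‖ := real_inner_le_norm G d
  have hs : 0 < μ + L := by linarith
  have hG : μ * ‖d‖ ≤ ‖G‖ := by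
    have hroots : (‖G‖ - μ * ‖d‖) * (‖G‖ - L * ‖d‖) ≤ 0 := by
      nlinarith [mul_le_mul_of_nonneg_left hCS hs.le]
    by_contra! hlt
    have hL : μ * ‖d‖ ≤ L * ‖d‖ := mul_le_mul_of_nonneg_right hμL (norm_nonneg d)
    nlinarith [mul_pos (sub_pos.2 hlt) (sub_pos.2 (hlt.trans_le hL))]
  have hsq : ‖d - β • G‖ ^ 2 ≤ ((1 - μ * β) * ‖d‖) ^ 2 := by
    rw [norm_sub_sq_real, real_inner_smul_right, norm_smul, Real.norm_eq_abs, mul_pow, sq_abs,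
      real_inner_comm]
    have hG2 : (μ * ‖d‖) ^ 2 ≤ ‖G‖ ^ 2 := pow_le_pow_left₀ (by positivity) hG 2
    nlinarith [mul_nonneg hβ0 (sub_nonneg.2 hinterp),
      mul_nonneg (mul_nonneg (sub_nonneg.2 hβ) hβ0) (sub_nonneg.2 hG2)]
  have hμβ : 0 ≤ 1 - μ * β := by nlinarith
  exact (pow_le_pow_iff_left₀ (norm_nonneg _) (mul_nonneg hμβ (norm_nonneg d)) two_ne_zero).1 hsq

end

/-- Lemma 3 (contraction of the gradient step): for a differentiable, μ-strongly convex
and L-smooth function `f` on a real inner product space, a gradient step with step size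
`β ≤ 2/(μ + L)` is a `(1 - μβ)`-contraction. -/
theorem gradient_step_contraction
    {E : Type*} [NormedAddCommGroup E] [InnerProductSpace ℝ E] [CompleteSpace E]
    (f : E → ℝ) (μ L β : ℝ)
    (hdiff : Differentiable ℝ f)
    (hμ : 0 < μ) (hμL : μ ≤ L)
    (hstrong : ∀ x y : E,
      f y ≥ f x + ⟪gradient f x, y - x⟫ + (μ / 2) * ‖y - x‖ ^ 2)
    (hsmooth : ∀ x y : E, ‖gradient f x - gradient f y‖ ≤ L * ‖x - y‖)
    (hβ0 : 0 < β) (hβ : β ≤ 2 / (μ + L)) :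
    ∀ x₁ x₂ : E,
      ‖x₁ - x₂ - β • (gradient f x₁ - gradient f x₂)‖ ≤ (1 - μ * β) * ‖x₁ - x₂‖ := by
  intro x₁ x₂
  have hgrad : ∀ x, HasGradientAt f (gradient f x) x := fun x ↦ (hdiff x).hasGradientAt
  have hβ' : β * (μ + L) ≤ 2 := (le_div_iff₀ (by linarith)).1 hβ
  exact norm_sub_smul_le_of_mul_norm_sq_add_norm_sq_le hμ hμL hβ0.le hβ'
    (mul_norm_sq_add_norm_sq_le_mul_inner_gradient_sub hμL hgrad hstrong hsmooth x₁ x₂)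
end

section
/- Let E be a real inner product space, and let f : E → ℝ be a differentiable function that is μ-strongly convex and L-smooth with 0 < μ ≤ L. Then for every β ≥ 0 and all x₁, x₂ ∈ E: ‖x₁ − x₂ − β(∇f(x₁) − ∇f(x₂))‖² ≤ (1 − β·(2μL/(μ + L)))·‖x₁ − x₂‖² − β·(2/(μ + L) − β)·‖∇f(x₁) − ∇f(x₂)‖². -/
/-!
Strong convexity and the descent lemma trap the Bregman divergence of `f` between
`μ/2 ‖y - x‖²` and `L/2 ‖y - x‖²`, so for `φ = f - μ/2 ‖·‖²` it lies between `0` and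
`(L - μ)/2 ‖y - x‖²`. Such a `φ` has a `(L - μ)`-co-coercive gradient, which unwinds to the
coercivity inequality for `∇f`; expanding `‖w - β g‖²` turns coercivity into the bound.
-/

open RealInnerProductSpace

section Bregman

variable {E : Type*} [NormedAddCommGroup E] [InnerProductSpace ℝ E]

def bregmanDiv (φ : E → ℝ) (G : E → E) (x y : E) : ℝ :=
  φ y - φ x - ⟪G x, y - x⟫

theorem bregmanDiv_add_bregmanDiv (φ : E → ℝ) (G : E → E) (x y : E) :
    bregmanDiv φ G x y + bregmanDiv φ G y x = ⟪G x - G y, x - y⟫ := by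
  simp only [bregmanDiv, inner_sub_left, inner_sub_right]
  ring

theorem bregmanDiv_three_point (φ : E → ℝ) (G : E → E) (x y z : E) :
    bregmanDiv φ G x y = bregmanDiv φ G x z - bregmanDiv φ G y z - ⟪G y - G x, z - y⟫ := by
  simp only [bregmanDiv, inner_sub_left, inner_sub_right]
  ring

theorem bregmanDiv_sub_half_mul_sq_norm (φ : E → ℝ) (G : E → E) (μ : ℝ) (x y : E) :
    bregmanDiv (fun z ↦ φ z - μ / 2 * ‖z‖ ^ 2) (fun z ↦ G z - μ • z) x y
      = bregmanDiv φ G x y - μ / 2 * ‖y - x‖ ^ 2 := by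
  simp only [bregmanDiv, norm_sub_sq_real, inner_sub_left, inner_sub_right,
    real_inner_smul_left, real_inner_self_eq_norm_sq, real_inner_comm x y]
  ring

theorem sq_norm_sub_div_le_bregmanDiv {φ : E → ℝ} {G : E → E} {C : ℝ} (hC : 0 < C)
    (hnonneg : ∀ x y, 0 ≤ bregmanDiv φ G x y)
    (hle : ∀ x y, bregmanDiv φ G x y ≤ C / 2 * ‖y - x‖ ^ 2) (x y : E) :
    ‖G y - G x‖ ^ 2 / (2 * C) ≤ bregmanDiv φ G x y := by
  set d := G y - G x
  -- `z = y - C⁻¹ • d` minimises `C / 2 * ‖z - y‖ ^ 2 + ⟪d, z - y⟫`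
  have hstep : y - C⁻¹ • d - y = -(C⁻¹ • d) := sub_sub_cancel_left _ _
  have hthree := bregmanDiv_three_point φ G x y (y - C⁻¹ • d)
  rw [hstep, inner_neg_right, real_inner_smul_right, real_inner_self_eq_norm_sq] at hthree
  have hupper := hle y (y - C⁻¹ • d)
  rw [hstep, norm_neg, norm_smul, mul_pow, Real.norm_eq_abs, sq_abs] at hupper
  have hval : ‖d‖ ^ 2 / (2 * C) = C⁻¹ * ‖d‖ ^ 2 - C / 2 * (C⁻¹ ^ 2 * ‖d‖ ^ 2) := by
    field_simp; ring
  linarith [hnonneg x (y - C⁻¹ • d)]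

theorem sq_norm_sub_le_mul_inner_of_bregmanDiv {φ : E → ℝ} {G : E → E} {C : ℝ} (hC : 0 < C)
    (hnonneg : ∀ x y, 0 ≤ bregmanDiv φ G x y)
    (hle : ∀ x y, bregmanDiv φ G x y ≤ C / 2 * ‖y - x‖ ^ 2) (x y : E) :
    ‖G x - G y‖ ^ 2 ≤ C * ⟪G x - G y, x - y⟫ := by
  have hxy := sq_norm_sub_div_le_bregmanDiv hC hnonneg hle x y
  have hyx := sq_norm_sub_div_le_bregmanDiv hC hnonneg hle y x
  rw [norm_sub_rev] at hxy
  have hhalf : ‖G x - G y‖ ^ 2 / C = 2 * (‖G x - G y‖ ^ 2 / (2 * C)) := by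
    field_simp
  rw [← bregmanDiv_add_bregmanDiv φ, ← div_le_iff₀' hC]
  linarith

theorem bregmanDiv_gradient_le_of_lipschitz [CompleteSpace E] {f : E → ℝ} {L : ℝ}
    (hf : Differentiable ℝ f)
    (hsmooth : ∀ x y : E, ‖gradient f x - gradient f y‖ ≤ L * ‖x - y‖) (x y : E) :
    bregmanDiv f (gradient f) x y ≤ L / 2 * ‖y - x‖ ^ 2 := by
  set v := y - x
  set ψ : ℝ → ℝ := fun t ↦ f (x + t • v) - t * ⟪gradient f x, v⟫ - L / 2 * t ^ 2 * ‖v‖ ^ 2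
  have hψ : ∀ t, HasDerivAt ψ
      (⟪gradient f (x + t • v), v⟫ - ⟪gradient f x, v⟫ - L * t * ‖v‖ ^ 2) t := by
    intro t
    have hline : HasDerivAt (fun t : ℝ ↦ x + t • v) v t := by
      simpa using ((hasDerivAt_id t).smul_const v).const_add x
    have hfx := ((hf _).hasGradientAt.hasFDerivAt).comp_hasDerivAt t hline
    simp only [InnerProductSpace.toDual_apply_apply] at hfx
    exact ((hfx.sub ((hasDerivAt_id t).mul_const ⟪gradient f x, v⟫)).sub
      (((hasDerivAt_pow 2 t).const_mul (L / 2)).mul_const (‖v‖ ^ 2))).congr_deriv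
      (by simp only [Nat.cast_ofNat]; ring)
  have hψ' : ∀ t ∈ interior (Set.Ici (0 : ℝ)),
      ⟪gradient f (x + t • v), v⟫ - ⟪gradient f x, v⟫ - L * t * ‖v‖ ^ 2 ≤ 0 := by
    intro t ht
    rw [interior_Ici, Set.mem_Ioi] at ht
    have hbound : ⟪gradient f (x + t • v), v⟫ - ⟪gradient f x, v⟫ ≤ L * t * ‖v‖ ^ 2 :=
      calc ⟪gradient f (x + t • v), v⟫ - ⟪gradient f x, v⟫
          = ⟪gradient f (x + t • v) - gradient f x, v⟫ := (inner_sub_left _ _ _).symm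
      _ ≤ ‖gradient f (x + t • v) - gradient f x‖ * ‖v‖ := real_inner_le_norm _ _
      _ ≤ L * ‖x + t • v - x‖ * ‖v‖ := by gcongr; exact hsmooth _ _
      _ = L * t * ‖v‖ ^ 2 := by
        rw [add_sub_cancel_left, norm_smul, Real.norm_of_nonneg ht.le]; ring
    linarith
  have hanti := antitoneOn_of_hasDerivWithinAt_nonpos (convex_Ici 0)
    (fun t _ ↦ (hψ t).continuousAt.continuousWithinAt)
    (fun t _ ↦ (hψ t).hasDerivWithinAt) hψ'
  have h01 : ψ 1 ≤ ψ 0 := hanti Set.self_mem_Ici (Set.mem_Ici.2 zero_le_one) zero_le_one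
  simp only [ψ, v, one_smul, zero_smul, add_zero, add_sub_cancel, one_mul, one_pow, zero_mul,
    zero_pow two_ne_zero, mul_zero, sub_zero] at h01
  simp only [bregmanDiv]
  linarith

theorem coercive_gradient_of_strongConvex_of_lipschitz [CompleteSpace E] {f : E → ℝ} {μ L : ℝ}
    (hf : Differentiable ℝ f) (hμ : 0 ≤ μ) (hμL : μ ≤ L)
    (hstrong : ∀ x y : E, f y ≥ f x + ⟪gradient f x, y - x⟫ + (μ / 2) * ‖y - x‖ ^ 2)
    (hsmooth : ∀ x y : E, ‖gradient f x - gradient f y‖ ≤ L * ‖x - y‖) (x y : E) :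
    μ * L * ‖x - y‖ ^ 2 + ‖gradient f x - gradient f y‖ ^ 2
      ≤ (μ + L) * ⟪x - y, gradient f x - gradient f y⟫ := by
  have hlower : ∀ x y, μ / 2 * ‖y - x‖ ^ 2 ≤ bregmanDiv f (gradient f) x y := fun x y ↦ by
    simp only [bregmanDiv]; linarith [hstrong x y]
  rcases hμL.eq_or_lt with rfl | hlt
  · -- `L - μ = 0`, so co-coercivity is unavailable; `‖∇f x - ∇f y‖ ≤ μ ‖x - y‖` suffices
    have hmono : μ * ‖x - y‖ ^ 2 ≤ ⟪x - y, gradient f x - gradient f y⟫ := by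
      have hsum := bregmanDiv_add_bregmanDiv f (gradient f) x y
      have hxy := hlower x y
      rw [norm_sub_rev] at hxy
      rw [real_inner_comm]
      linarith [hlower y x]
    have hsq : ‖gradient f x - gradient f y‖ ^ 2 ≤ (μ * ‖x - y‖) ^ 2 :=
      pow_le_pow_left₀ (norm_nonneg _) (hsmooth x y) 2
    nlinarith [mul_le_mul_of_nonneg_left hmono hμ]
  · have hcocoercive := sq_norm_sub_le_mul_inner_of_bregmanDiv (φ := fun z ↦ f z - μ / 2 * ‖z‖ ^ 2)
      (G := fun z ↦ gradient f z - μ • z) (sub_pos.2 hlt)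
      (fun x y ↦ by rw [bregmanDiv_sub_half_mul_sq_norm]; linarith [hlower x y])
      (fun x y ↦ by
        rw [bregmanDiv_sub_half_mul_sq_norm]
        linarith [bregmanDiv_gradient_le_of_lipschitz hf hsmooth x y]) x y
    have hsplit : gradient f x - μ • x - (gradient f y - μ • y)
        = (gradient f x - gradient f y) - μ • (x - y) := by
      rw [smul_sub]; abel
    rw [hsplit] at hcocoercive
    set g := gradient f x - gradient f y
    set w := x - y
    rw [norm_sub_sq_real, inner_sub_left g (μ • w) w, real_inner_smul_left, real_inner_smul_right,
      real_inner_self_eq_norm_sq, norm_smul, Real.norm_of_nonneg hμ, real_inner_comm w] at hcocoercive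
    nlinarith [hcocoercive]

end Bregman

/-- Intermediate inequality in the proof of the contraction lemma for the gradient step. -/
theorem gradient_step_sq_bound
    {E : Type*} [NormedAddCommGroup E] [InnerProductSpace ℝ E] [CompleteSpace E]
    (f : E → ℝ) (μ L : ℝ)
    (hdiff : Differentiable ℝ f)
    (hμ : 0 < μ) (hμL : μ ≤ L)
    (hstrong : ∀ x y : E,
      f y ≥ f x + ⟪gradient f x, y - x⟫ + (μ / 2) * ‖y - x‖ ^ 2)
    (hsmooth : ∀ x y : E, ‖gradient f x - gradient f y‖ ≤ L * ‖x - y‖) :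
    ∀ β : ℝ, 0 ≤ β → ∀ x₁ x₂ : E,
      ‖x₁ - x₂ - β • (gradient f x₁ - gradient f x₂)‖ ^ 2 ≤
        (1 - β * (2 * μ * L / (μ + L))) * ‖x₁ - x₂‖ ^ 2
          - β * (2 / (μ + L) - β) * ‖gradient f x₁ - gradient f x₂‖ ^ 2 := by
  intro β hβ x₁ x₂
  have hcoercive := coercive_gradient_of_strongConvex_of_lipschitz hdiff hμ.le hμL hstrong
    hsmooth x₁ x₂
  set g := gradient f x₁ - gradient f x₂
  set w := x₁ - x₂
  have hcoercive' : μ * L / (μ + L) * ‖w‖ ^ 2 + 1 / (μ + L) * ‖g‖ ^ 2 ≤ ⟪w, g⟫ := by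
    rw [show μ * L / (μ + L) * ‖w‖ ^ 2 + 1 / (μ + L) * ‖g‖ ^ 2
      = (μ * L * ‖w‖ ^ 2 + ‖g‖ ^ 2) / (μ + L) by ring]
    exact (div_le_iff₀' (by linarith)).2 hcoercive
  rw [norm_sub_sq_real, norm_smul, real_inner_smul_right, Real.norm_of_nonneg hβ]
  linear_combination 2 * mul_le_mul_of_nonneg_left hcoercive' hβ
end

section
/- Let E be a real inner product space, n ≥ 1, and for each i ∈ Fin n let fᵢ : E → ℝ be differentiable, μᵢ-strongly convex (μᵢ > 0), and with Lᵢ-Lipschitz gradient. Set L = ∑ᵢ Lᵢ, μ = minᵢ μᵢ, assume μ ≤ L, and assume the sum F = ∑ᵢ fᵢ is μ-strongly convex and has L-Lipschitz gradient. Let x* ∈ E satisfy ∇F(x*) = 0. Let Δ ≥ 0 and let the step size α satisfy 0 < α ≤ 2n/(μ + L). Suppose points xᵢ, x̂ ∈ E satisfy ‖xᵢ − x̂‖ ≤ 4Δ for all i, and let e ∈ E with ‖e‖ ≤ 2Δ. Define the updated average x̂⁺ = x̂ − (α/n)·∑ᵢ ∇fᵢ(xᵢ) + e. Then ‖x̂⁺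 − x*‖ ≤ (1 − αμ/n)·‖x̂ − x*‖ + (4αL/n + 2)·Δ. -/
open RealInnerProductSpace

/-!
With `β = α / n`, split `x̂⁺ - x* = (x̂ - x* - β ∇F(x̂)) + (β (∇F(x̂) - ∑ᵢ ∇fᵢ(xᵢ)) + e)`.
The first term is an exact gradient step on `F` from `x̂`. Since `∇F(x*) = 0`, it contracts
`‖x̂ - x*‖` by the factor `1 - βμ` whenever `β (μ + L) ≤ 2`, by the co-coercivity inequality
`‖∇F y - ∇F x‖² + μL ‖y - x‖² ≤ (μ + L) ⟪∇F y - ∇F x, y - x⟫` of `μ`-strongly convex functions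
with `L`-Lipschitz gradient (Nesterov, Thm. 2.1.12). The latter follows from the co-coercivity
`‖∇h y - ∇h x‖² ≤ K ⟪∇h y - ∇h x, y - x⟫` of the convex, `K = (L - μ)`-smooth function
`h = F - μ/2 ‖·‖²`. The second term is at most `β · L · 4Δ + 2Δ` by the local Lipschitz bounds.
-/

theorem gradient_fun_sum {𝕜 F ι : Type*} [RCLike 𝕜] [NormedAddCommGroup F] [InnerProductSpace 𝕜 F]
    [CompleteSpace F] {s : Finset ι} {f : ι → F → 𝕜} {x : F}
    (h : ∀ i ∈ s, DifferentiableAt 𝕜 (f i) x) :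
    gradient (fun y => ∑ i ∈ s, f i y) x = ∑ i ∈ s, gradient (f i) x := by
  simp only [gradient, fderiv_fun_sum h, map_sum]

theorem norm_sum_sub_le_sum_mul {ι X Y : Type*} [NormedAddCommGroup X] [Nontrivial X]
    [SeminormedAddCommGroup Y] (s : Finset ι) {g : ι → X → Y} {K : ι → ℝ}
    (hg : ∀ i a b, ‖g i a - g i b‖ ≤ K i * ‖a - b‖) {a : ι → X} {b : X} {r : ℝ}
    (hr : ∀ i, ‖a i - b‖ ≤ r) :
    ‖∑ i ∈ s, (g i b - g i (a i))‖ ≤ (∑ i ∈ s, K i) * r := by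
  have hK : ∀ i, 0 ≤ K i := by
    intro i
    obtain ⟨v, hv⟩ := exists_ne (0 : X)
    have := (norm_nonneg _).trans (hg i v 0)
    rwa [sub_zero, mul_nonneg_iff_of_pos_right (norm_pos_iff.mpr hv)] at this
  rw [Finset.sum_mul]
  refine (norm_sum_le _ _).trans (Finset.sum_le_sum fun i _ => ?_)
  calc ‖g i b - g i (a i)‖ ≤ K i * ‖b - a i‖ := hg i _ _
    _ ≤ K i * r := mul_le_mul_of_nonneg_left (norm_sub_rev b (a i) ▸ hr i) (hK i)

section

variable {E : Type*} [NormedAddCommGroup E] [InnerProductSpace ℝ E]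

theorem upper_quadratic_bound_of_lipschitz_gradient [CompleteSpace E] {f : E → ℝ} {L : ℝ}
    (hf : Differentiable ℝ f)
    (hlip : ∀ a b : E, ‖gradient f a - gradient f b‖ ≤ L * ‖a - b‖) (x y : E) :
    f y ≤ f x + ⟪gradient f x, y - x⟫ + L / 2 * ‖y - x‖ ^ 2 := by
  set d := y - x
  let φ : ℝ → ℝ := fun t => f (x + t • d) - t * ⟪gradient f x, d⟫ - L / 2 * t ^ 2 * ‖d‖ ^ 2
  have hφ : ∀ t, HasDerivAt φ (⟪gradient f (x + t • d) - gradient f x, d⟫ - L * t * ‖d‖ ^ 2) t := by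
    intro t
    have hline : HasDerivAt (fun s : ℝ => x + s • d) d t := by
      simpa using ((hasDerivAt_id t).smul_const d).const_add x
    have hfline := (hf (x + t • d)).hasGradientAt.hasFDerivAt.comp_hasDerivAt t hline
    refine ((hfline.sub ((hasDerivAt_id t).mul_const ⟪gradient f x, d⟫)).sub
      (((hasDerivAt_pow 2 t).const_mul (L / 2)).mul_const (‖d‖ ^ 2))).congr_deriv ?_
    simp only [InnerProductSpace.toDual_apply_apply, inner_sub_left]
    ring
  have hφ_nonpos : ∀ t, 0 ≤ t →
      ⟪gradient f (x + t • d) - gradient f x, d⟫ - L * t * ‖d‖ ^ 2 ≤ 0 := by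
    intro t ht
    have hstep : ‖gradient f (x + t • d) - gradient f x‖ ≤ L * (t * ‖d‖) := by
      simpa [norm_smul, abs_of_nonneg ht] using hlip (x + t • d) x
    nlinarith [real_inner_le_norm (gradient f (x + t • d) - gradient f x) d,
      mul_le_mul_of_nonneg_right hstep (norm_nonneg d)]
  have hanti := antitoneOn_of_hasDerivWithinAt_nonpos (convex_Ici 0)
    (HasDerivAt.continuousOn fun t _ => hφ t) (fun t _ => (hφ t).hasDerivWithinAt)
    (fun t ht => hφ_nonpos t (interior_subset ht).out)
    Set.self_mem_Ici (Set.mem_Ici.mpr zero_le_one) zero_le_one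
  simp only [φ, zero_smul, add_zero, one_smul, add_sub_cancel, d] at hanti
  linarith

theorem sq_norm_sub_le_mul_inner_sub {φ : E → ℝ} {G : E → E} {K : ℝ} (hK : 0 ≤ K)
    (hlower : ∀ a b, φ a + ⟪G a, b - a⟫ ≤ φ b)
    (hupper : ∀ a b, φ b ≤ φ a + ⟪G a, b - a⟫ + K / 2 * ‖b - a‖ ^ 2) (x y : E) :
    ‖G y - G x‖ ^ 2 ≤ K * ⟪G y - G x, y - x⟫ := by
  set w := G y - G x
  -- chain the lower bound at `x` and the upper bound at `y` through `y - t • w`, and symmetrically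
  have key : ∀ t : ℝ, (2 * t - K * t ^ 2) * ‖w‖ ^ 2 ≤ ⟪w, y - x⟫ := by
    intro t
    have h₁ := (hlower x (y - t • w)).trans (hupper y (y - t • w))
    have h₂ := (hlower y (x + t • w)).trans (hupper x (x + t • w))
    have e₁ : y - t • w - x = (y - x) - t • w := by abel
    have e₂ : x + t • w - y = -(y - x) + t • w := by abel
    simp only [e₁, e₂, sub_sub_cancel_left, add_sub_cancel_left, inner_sub_right, inner_add_right,
      inner_neg_right, real_inner_smul_right, norm_neg, norm_smul, Real.norm_eq_abs, mul_pow,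
      sq_abs] at h₁ h₂
    have hw : t * ⟪G y, w⟫ - t * ⟪G x, w⟫ = t * ‖w‖ ^ 2 := by
      rw [← mul_sub, ← inner_sub_left, real_inner_self_eq_norm_sq]
    have hwd : ⟪w, y - x⟫ = ⟪G y, y⟫ - ⟪G y, x⟫ - (⟪G x, y⟫ - ⟪G x, x⟫) := by
      simp only [w, inner_sub_left, inner_sub_right]
      ring
    rw [hwd]
    linear_combination h₁ + h₂ - 2 * hw
  rcases hK.eq_or_lt with rfl | hK
  · by_contra! hneg
    have hw : 0 < ‖w‖ := by
      by_contra! hw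
      nlinarith [norm_nonneg w]
    have h2ts : 2 * ((⟪w, y - x⟫ + 1) / (2 * ‖w‖ ^ 2)) * ‖w‖ ^ 2 = ⟪w, y - x⟫ + 1 := by
      field_simp [hw.ne']
    linarith [key ((⟪w, y - x⟫ + 1) / (2 * ‖w‖ ^ 2))]
  · have hKinv : 2 * K⁻¹ - K * K⁻¹ ^ 2 = K⁻¹ := by
      field_simp
      ring
    have := key K⁻¹
    rw [hKinv] at this
    exact (inv_mul_le_iff₀ hK).mp this

theorem sq_norm_sub_add_mul_sq_le_inner_sub {φ : E → ℝ} {G : E → E} {μ L : ℝ} (hμL : μ ≤ L)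
    (hstrong : ∀ a b, φ b ≥ φ a + ⟪G a, b - a⟫ + (μ / 2) * ‖b - a‖ ^ 2)
    (hupper : ∀ a b, φ b ≤ φ a + ⟪G a, b - a⟫ + L / 2 * ‖b - a‖ ^ 2) (x y : E) :
    ‖G y - G x‖ ^ 2 + μ * L * ‖y - x‖ ^ 2 ≤ (μ + L) * ⟪G y - G x, y - x⟫ := by
  have hsq : ∀ a b : E, ‖b - a‖ ^ 2 = ‖b‖ ^ 2 - ‖a‖ ^ 2 - 2 * ⟪a, b - a⟫ := by
    intro a b
    rw [norm_sub_sq_real, inner_sub_right, real_inner_self_eq_norm_sq, real_inner_comm]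
    ring
  have hshift : ∀ a b : E, ⟪G a - μ • a, b - a⟫ = ⟪G a, b - a⟫ - μ * ⟪a, b - a⟫ := by
    intro a b
    rw [inner_sub_left, real_inner_smul_left]
  have key := sq_norm_sub_le_mul_inner_sub (φ := fun a => φ a - μ / 2 * ‖a‖ ^ 2)
    (G := fun a => G a - μ • a) (sub_nonneg.mpr hμL)
    (fun a b => by rw [hshift]; linear_combination hstrong a b - (μ / 2) * hsq a b)
    (fun a b => by rw [hshift]; linear_combination hupper a b + (μ / 2) * hsq a b) x y
  have hw : G y - μ • y - (G x - μ • x) = (G y - G x) - μ • (y - x) := by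
    rw [smul_sub]; abel
  set g := G y - G x
  set d := y - x
  have hnorm : ‖g - μ • d‖ ^ 2 = ‖g‖ ^ 2 - 2 * μ * ⟪g, d⟫ + μ ^ 2 * ‖d‖ ^ 2 := by
    rw [norm_sub_sq_real, real_inner_smul_right, norm_smul, Real.norm_eq_abs, mul_pow, sq_abs]
    ring
  have hinner : ⟪g - μ • d, d⟫ = ⟪g, d⟫ - μ * ‖d‖ ^ 2 := by
    rw [inner_sub_left, real_inner_smul_left, real_inner_self_eq_norm_sq]
  rw [hw, hnorm, hinner] at key
  linear_combination key

theorem norm_sub_smul_le_of_cocoercive {g d : E} {μ L β : ℝ} (hμ : 0 ≤ μ) (hμL : μ ≤ L)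
    (hβ : 0 ≤ β) (hβμL : β * (μ + L) ≤ 2)
    (h : ‖g‖ ^ 2 + μ * L * ‖d‖ ^ 2 ≤ (μ + L) * ⟪g, d⟫) :
    ‖d - β • g‖ ≤ (1 - β * μ) * ‖d‖ := by
  have hcs := real_inner_le_norm g d
  have hg : μ * ‖d‖ ≤ ‖g‖ := by
    by_contra! hlt
    have hLg : ‖g‖ < L * ‖d‖ := hlt.trans_le (mul_le_mul_of_nonneg_right hμL (norm_nonneg d))
    nlinarith [mul_pos (sub_pos.2 hlt) (sub_pos.2 hLg),
      mul_le_mul_of_nonneg_left hcs (by linarith : 0 ≤ μ + L)]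
  have hmono : μ * ‖d‖ ^ 2 ≤ ⟪g, d⟫ := by
    rcases (add_nonneg hμ (hμ.trans hμL)).eq_or_lt with hzero | hpos
    · obtain ⟨rfl, rfl⟩ : μ = 0 ∧ L = 0 := ⟨by linarith, by linarith⟩
      have hg0 : g = 0 := norm_eq_zero.mp (by nlinarith [norm_nonneg g])
      simp [hg0]
    · nlinarith [mul_le_mul hg hg (mul_nonneg hμ (norm_nonneg d)) (norm_nonneg g)]
  have hβμ : β * μ ≤ 1 := by nlinarith
  -- `((1 - βμ)‖d‖)² - ‖d - βg‖²`
  --   `= β (2 - β(μ+L)) (⟪g, d⟫ - μ‖d‖²) + β² ((μ+L)⟪g, d⟫ - ‖g‖² - μL‖d‖²)`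
  refine le_of_sq_le_sq ?_ (mul_nonneg (by linarith) (norm_nonneg d))
  rw [norm_sub_sq_real, real_inner_smul_right, norm_smul, Real.norm_eq_abs, mul_pow, sq_abs,
    real_inner_comm]
  nlinarith [mul_nonneg (mul_nonneg hβ (sub_nonneg.2 hβμL)) (sub_nonneg.2 hmono),
    mul_nonneg (sq_nonneg β) (sub_nonneg.2 h)]

end

theorem quantized_gradient_descent_one_step_general
    {E : Type*} [NormedAddCommGroup E] [InnerProductSpace ℝ E] [CompleteSpace E]
    (n : ℕ)
    (f : Fin n → E → ℝ) (μloc Lloc : Fin n → ℝ)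
    (hdiff : ∀ i, Differentiable ℝ (f i))
    (hμloc : ∀ i, 0 < μloc i)
    (hsmoothloc : ∀ i, ∀ x y : E,
      ‖gradient (f i) x - gradient (f i) y‖ ≤ Lloc i * ‖x - y‖)
    (L μ : ℝ) (hL : L = ∑ i, Lloc i) (hμ : μ = ⨅ i, μloc i) (hμL : μ ≤ L)
    (F : E → ℝ) (hF : F = fun y => ∑ i, f i y)
    (hstrong : ∀ x y : E,
      F y ≥ F x + ⟪gradient F x, y - x⟫ + (μ / 2) * ‖y - x‖ ^ 2)
    (hsmooth : ∀ x y : E, ‖gradient F x - gradient F y‖ ≤ L * ‖x - y‖)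
    (xstar : E) (hxstar : gradient F xstar = 0)
    (Δ : ℝ)
    (α : ℝ) (hα0 : 0 < α) (hα : α ≤ 2 * n / (μ + L))
    (x : Fin n → E) (xhat : E) (hx : ∀ i, ‖x i - xhat‖ ≤ 4 * Δ)
    (e : E) (he : ‖e‖ ≤ 2 * Δ)
    (xhatnext : E) (hxhatnext : xhatnext = xhat - (α / n) • (∑ i, gradient (f i) (x i)) + e) :
    ‖xhatnext - xstar‖ ≤ (1 - α * μ / n) * ‖xhat - xstar‖ + (4 * α * L / n + 2) * Δ := by
  obtain ⟨hn, hμL_pos⟩ : 0 < (n : ℝ) ∧ 0 < μ + L := by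
    rcases div_pos_iff.mp (hα0.trans_le hα) with h | ⟨h, -⟩
    · exact ⟨by linarith [h.1], h.2⟩
    · exact absurd h (not_lt.mpr (by positivity))
  have hμ₀ : 0 ≤ μ := hμ ▸ Real.iInf_nonneg fun i => (hμloc i).le
  have hβ : α / n * (μ + L) ≤ 2 := by
    rw [div_mul_eq_mul_div, div_le_iff₀ hn, ← le_div_iff₀ hμL_pos]
    linarith
  have hdesc := upper_quadratic_bound_of_lipschitz_gradient
    (hF ▸ Differentiable.fun_sum fun i _ => hdiff i) hsmooth
  have hcoco := sq_norm_sub_add_mul_sq_le_inner_sub hμL hstrong hdesc xstar xhat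
  rw [hxstar, sub_zero] at hcoco
  have hstep := norm_sub_smul_le_of_cocoercive hμ₀ hμL (div_nonneg hα0.le hn.le) hβ hcoco
  have herr : ‖gradient F xhat - ∑ i, gradient (f i) (x i)‖ ≤ L * (4 * Δ) := by
    rcases subsingleton_or_nontrivial E with _ | _
    · rw [Subsingleton.elim (_ - _ : E) 0, norm_zero]
      nlinarith [norm_nonneg e]
    · rw [hF, gradient_fun_sum fun i _ => (hdiff i).differentiableAt, ← Finset.sum_sub_distrib, hL]
      exact norm_sum_sub_le_sum_mul _ hsmoothloc hx
  calc ‖xhatnext - xstar‖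
      = ‖(xhat - xstar - (α / n) • gradient F xhat)
          + (α / n) • (gradient F xhat - ∑ i, gradient (f i) (x i)) + e‖ := by
        rw [hxhatnext, smul_sub]
        congr 1
        abel
    _ ≤ ‖xhat - xstar - (α / n) • gradient F xhat‖
          + ‖(α / n) • (gradient F xhat - ∑ i, gradient (f i) (x i))‖ + ‖e‖ := norm_add₃_le
    _ ≤ (1 - α / n * μ) * ‖xhat - xstar‖ + α / n * (L * (4 * Δ)) + 2 * Δ := by
        rw [norm_smul, Real.norm_of_nonneg (div_nonneg hα0.le hn.le)]
        gcongr
    _ = (1 - α * μ / n) * ‖xhat - xstar‖ + (4 * α * L / n + 2) * Δ := by ring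

/-- One-step contraction of the quantized averaged gradient descent iteration. -/
theorem quantized_gradient_descent_one_step
    {E : Type*} [NormedAddCommGroup E] [InnerProductSpace ℝ E] [CompleteSpace E]
    (n : ℕ) (hn : 1 ≤ n)
    (f : Fin n → E → ℝ) (μloc Lloc : Fin n → ℝ)
    (hdiff : ∀ i, Differentiable ℝ (f i))
    (hμloc : ∀ i, 0 < μloc i)
    (hstrongloc : ∀ i, ∀ x y : E,
      f i y ≥ f i x + ⟪gradient (f i) x, y - x⟫ + (μloc i / 2) * ‖y - x‖ ^ 2)
    (hsmoothloc : ∀ i, ∀ x y : E,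
      ‖gradient (f i) x - gradient (f i) y‖ ≤ Lloc i * ‖x - y‖)
    (L μ : ℝ) (hL : L = ∑ i, Lloc i) (hμ : μ = ⨅ i, μloc i) (hμL : μ ≤ L)
    (F : E → ℝ) (hF : F = fun y => ∑ i, f i y)
    (hstrong : ∀ x y : E,
      F y ≥ F x + ⟪gradient F x, y - x⟫ + (μ / 2) * ‖y - x‖ ^ 2)
    (hsmooth : ∀ x y : E, ‖gradient F x - gradient F y‖ ≤ L * ‖x - y‖)
    (xstar : E) (hxstar : gradient F xstar = 0)
    (Δ : ℝ) (hΔ : 0 ≤ Δ)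
    (α : ℝ) (hα0 : 0 < α) (hα : α ≤ 2 * n / (μ + L))
    (x : Fin n → E) (xhat : E) (hx : ∀ i, ‖x i - xhat‖ ≤ 4 * Δ)
    (e : E) (he : ‖e‖ ≤ 2 * Δ)
    (xhatnext : E) (hxhatnext : xhatnext = xhat - (α / n) • (∑ i, gradient (f i) (x i)) + e) :
    ‖xhatnext - xstar‖ ≤ (1 - α * μ / n) * ‖xhat - xstar‖ + (4 * α * L / n + 2) * Δ :=
  quantized_gradient_descent_one_step_general n f μloc Lloc hdiff hμloc hsmoothloc L μ hL hμ hμL F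
    hF hstrong hsmooth xstar hxstar Δ α hα0 hα x xhat hx e he xhatnext hxhatnext
end
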